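/- Compositionality of sequential composition: there exists an operator comp : (Q1 → I1 → Q1 × O1) → (Q2 → O1 → Q2 × O2) → ((Q1 × O1 × Q2) → I1 → (Q1 × O1 × Q2) × O2), a function of the two system functions alone, such that for all system functions f1, f2, all trajectories (q1, in1, out1) aggregated by f1 and (q2, in2, out2) aggregated by f2, and all times τ1, τ2 : ℕ satisfying the concatenation condition out1 (τ1+1) = in2 τ2, one has ((q1 (τ1+1), out1 (τ1+1), q2 (τ2+1)), out2 (τ2+1)) = comp f1 f2 (q1 τ1, out1 τ1, q2 τ2) (in1 τ1). In other words, the system function of the sequential composite is obtained from the system functions of the parts by a fixed (homomorphic) operation. -/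

import Mathlib

section SequentialComposition

variable {Q1 I1 O1 Q2 O2 : Type*}

/-- The composite's state also records the first system's latest output; within one step the
second system reads the output the first system has just produced. -/
def seqComp (f1 : Q1 → I1 → Q1 × O1) (f2 : Q2 → O1 → Q2 × O2) (s : Q1 × O1 × Q2) (i : I1) :
    (Q1 × O1 × Q2) × O2 :=
  (((f1 s.1 i).1, (f1 s.1 i).2, (f2 s.2.2 (f1 s.1 i).2).1), (f2 s.2.2 (f1 s.1 i).2).2)

theorem seqComp_eq_of_eq {f1 : Q1 → I1 → Q1 × O1} {f2 : Q2 → O1 → Q2 × O2}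
    {q1 q1' : Q1} {i : I1} {o1 o1' : O1} {q2 q2' : Q2} {o2' : O2}
    (h1 : f1 q1 i = (q1', o1')) (h2 : f2 q2 o1' = (q2', o2')) :
    seqComp f1 f2 (q1, o1, q2) i = ((q1', o1', q2'), o2') := by
  simp [seqComp, h1, h2]

end SequentialComposition

/-- Compositionality of sequential composition: there is an operator `comp`,
a function of the two system functions alone, that yields the system function
of the sequential composite. -/
theorem sequential_composition_compositional
    {Q1 I1 O1 Q2 O2 : Type*} :
    ∃ comp : (Q1 → I1 → Q1 × O1) → (Q2 → O1 → Q2 × O2) →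
      ((Q1 × O1 × Q2) → I1 → (Q1 × O1 × Q2) × O2),
      ∀ (f1 : Q1 → I1 → Q1 × O1) (f2 : Q2 → O1 → Q2 × O2)
        (q1 : ℕ → Q1) (in1 : ℕ → I1) (out1 : ℕ → O1)
        (q2 : ℕ → Q2) (in2 : ℕ → O1) (out2 : ℕ → O2),
        (∀ t, q1 (t + 1) = (f1 (q1 t) (in1 t)).1) →
        (∀ t, out1 (t + 1) = (f1 (q1 t) (in1 t)).2) →
        (∀ t, q2 (t + 1) = (f2 (q2 t) (in2 t)).1) →
        (∀ t, out2 (t + 1) = (f2 (q2 t) (in2 t)).2) →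
        ∀ τ1 τ2 : ℕ, out1 (τ1 + 1) = in2 τ2 →
          ((q1 (τ1 + 1), out1 (τ1 + 1), q2 (τ2 + 1)), out2 (τ2 + 1)) =
            comp f1 f2 (q1 τ1, out1 τ1, q2 τ2) (in1 τ1) := by
  refine ⟨seqComp, fun f1 f2 q1 in1 out1 q2 in2 out2 hq1 hout1 hq2 hout2 τ1 τ2 hconcat => ?_⟩
  have step1 : f1 (q1 τ1) (in1 τ1) = (q1 (τ1 + 1), out1 (τ1 + 1)) :=
    Prod.ext (hq1 τ1).symm (hout1 τ1).symm
  have step2 : f2 (q2 τ2) (out1 (τ1 + 1)) = (q2 (τ2 + 1), out2 (τ2 + 1)) := by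
    rw [hconcat]
    exact Prod.ext (hq2 τ2).symm (hout2 τ2).symm
  exact (seqComp_eq_of_eq step1 step2).symm
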